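/- arXiv:2501.03768 — 4 statements merged into one kernel-verified Lean document; each statement's English description precedes it below -/
import Mathlib

section
/- In an abelian lattice-ordered group G with weak order unit, the set c(G) of complemented positive elements is a sublattice of G⁺: if e, f ∈ c(G), then e ∧ f ∈ c(G) and e ∨ f ∈ c(G). -/
variable {G : Type*} [Lattice G] [AddCommGroup G]
  [CovariantClass G G (· + ·) (· ≤ ·)]

/-- The polar of a subset `S` of a lattice-ordered group. -/
def polar (S : Set G) : Set G := {h : G | ∀ g ∈ S, |h| ⊓ |g| = 0}

/-- A convex ℓ-subgroup: a subgroup closed under the lattice operations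
which is convex. -/
def IsConvexLSubgroup (H : Set G) : Prop :=
  (0 : G) ∈ H ∧ (∀ a ∈ H, ∀ b ∈ H, a + b ∈ H) ∧ (∀ a ∈ H, -a ∈ H) ∧
  (∀ a ∈ H, ∀ b ∈ H, a ⊔ b ∈ H) ∧ (∀ a ∈ H, ∀ b ∈ H, a ⊓ b ∈ H) ∧
  (∀ a b : G, 0 ≤ a → a ≤ b → b ∈ H → a ∈ H)

/-- A weak order unit: a positive element with trivial polar. -/
def IsWeakUnit (w : G) : Prop := 0 ≤ w ∧ ∀ x : G, |x| ⊓ w = 0 → x = 0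

/-- A d-subgroup: a convex ℓ-subgroup closed under double polars. -/
def IsDSubgroup (H : Set G) : Prop :=
  IsConvexLSubgroup H ∧ ∀ h ∈ H, polar (polar {h}) ⊆ H

/-- A maximal d-subgroup: a convex ℓ-subgroup maximal with respect to
not containing any weak order unit. -/
def IsMaxD (M : Set G) : Prop :=
  IsConvexLSubgroup M ∧ (∀ w ∈ M, ¬ IsWeakUnit w) ∧
  ∀ H : Set G, IsConvexLSubgroup H → (∀ w ∈ H, ¬ IsWeakUnit w) → M ⊆ H → H = M

/-- A complemented element. -/
def IsComplementedElt (g : G) : Prop :=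
  0 ≤ g ∧ ∃ f : G, 0 ≤ f ∧ g ⊓ f = 0 ∧ IsWeakUnit (g ⊔ f)

/-- A c-subgroup: a convex ℓ-subgroup generated by its complemented elements,
equivalently every element is dominated in absolute value by a complemented
element of the subgroup. -/
def IsCSubgroup (H : Set G) : Prop :=
  IsConvexLSubgroup H ∧ ∀ h ∈ H, ∃ e ∈ H, IsComplementedElt e ∧ |h| ≤ e

/-- A maximal proper c-subgroup: a c-subgroup maximal with respect to
not containing any weak order unit. -/
def IsMaxC (N : Set G) : Prop :=
  IsCSubgroup N ∧ (∀ w ∈ N, ¬ IsWeakUnit w) ∧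
  ∀ H : Set G, IsCSubgroup H → (∀ w ∈ H, ¬ IsWeakUnit w) → N ⊆ H → H = N

/-- `Mc M`: the convex ℓ-subgroup generated by the complemented elements of `M`. -/
def Mc (M : Set G) : Set G :=
  ⋂₀ {H : Set G | IsConvexLSubgroup H ∧ {e ∈ M | IsComplementedElt e} ⊆ H}

private lemma my_inf_sup_distrib (a b c : G) : a ⊓ (b ⊔ c) = a ⊓ b ⊔ a ⊓ c := by
  letI := AddCommGroup.toDistribLattice G
  exact inf_sup_left a b c

private lemma my_disj (a b : G) (ha : 0 ≤ a) (hb : 0 ≤ b) (h : a ⊓ b ≤ 0) :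
    a ⊓ b = 0 := le_antisymm h (le_inf ha hb)

private lemma my_key (p q y : G) (hw : IsWeakUnit (p ⊔ q)) (hy : 0 ≤ y)
    (h1 : y ⊓ p = 0) (h2 : y ⊓ q = 0) : y = 0 := by
  apply hw.2
  rw [abs_of_nonneg hy, my_inf_sup_distrib, h1, h2, sup_idem]

/-- the complemented elements form a sublattice of `G⁺`:
the inf and sup of two complemented elements are complemented. -/
theorem complemented_inf_sup (u : G) (hu : IsWeakUnit u)
    (e f : G) (he : IsComplementedElt e) (hf : IsComplementedElt f) :
    IsComplementedElt (e ⊓ f) ∧ IsComplementedElt (e ⊔ f) := by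
  obtain ⟨he0, e', he'0, hee', hwe⟩ := he
  obtain ⟨hf0, f', hf'0, hff', hwf⟩ := hf
  -- generic weak-unit argument
  have main : ∀ x : G, |x| ⊓ e = 0 → |x| ⊓ e' = 0 → x = 0 := fun x h1 h2 => by
    apply hwe.2
    rw [my_inf_sup_distrib, h1, h2, sup_idem]
  have hef0 : (0:G) ≤ e ⊓ f := le_inf he0 hf0
  have hef0' : (0:G) ≤ e' ⊔ f' := le_trans he'0 le_sup_left
  have hEF : (0:G) ≤ e ⊔ f := le_trans he0 le_sup_left
  have hEF' : (0:G) ≤ e' ⊓ f' := le_inf he'0 hf'0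
  constructor
  · refine ⟨hef0, e' ⊔ f', hef0', ?_, ?_, ?_⟩
    · rw [my_inf_sup_distrib]
      have h1 : (e ⊓ f) ⊓ e' = 0 := my_disj _ _ hef0 he'0
        (by calc (e ⊓ f) ⊓ e' ≤ e ⊓ e' := inf_le_inf_right e' inf_le_left
                _ = 0 := hee')
      have h2 : (e ⊓ f) ⊓ f' = 0 := my_disj _ _ hef0 hf'0
        (by calc (e ⊓ f) ⊓ f' ≤ f ⊓ f' := inf_le_inf_right f' inf_le_right
                _ = 0 := hff')
      rw [h1, h2, sup_idem]
    · exact le_trans hef0 le_sup_left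
    · intro x hx
      have ha : (0:G) ≤ |x| := abs_nonneg x
      have comp : ∀ c : G, 0 ≤ c → c ≤ e ⊓ f ⊔ (e' ⊔ f') → |x| ⊓ c = 0 :=
        fun c hc hcle => my_disj _ _ ha hc (hx ▸ inf_le_inf_left _ hcle)
      have hxe' : |x| ⊓ e' = 0 := comp e' he'0 (le_trans le_sup_left le_sup_right)
      have hxf' : |x| ⊓ f' = 0 := comp f' hf'0 (le_trans le_sup_right le_sup_right)
      have hxef : |x| ⊓ (e ⊓ f) = 0 := comp _ hef0 le_sup_left
      have hy : (0:G) ≤ |x| ⊓ e := le_inf ha he0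
      have hyz : |x| ⊓ e = 0 := by
        refine my_key f f' _ hwf hy ?_ ?_
        · rw [inf_assoc]; exact hxef
        · exact my_disj _ _ hy hf'0
            (le_trans (inf_le_inf_right f' inf_le_left) hxf'.le)
      exact main x hyz hxe'
  · refine ⟨hEF, e' ⊓ f', hEF', ?_, ?_, ?_⟩
    · rw [inf_comm, my_inf_sup_distrib]
      have h1 : (e' ⊓ f') ⊓ e = 0 := my_disj _ _ hEF' he0
        (by calc (e' ⊓ f') ⊓ e ≤ e' ⊓ e := inf_le_inf_right e inf_le_left
                _ = 0 := by rw [inf_comm]; exact hee')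
      have h2 : (e' ⊓ f') ⊓ f = 0 := my_disj _ _ hEF' hf0
        (by calc (e' ⊓ f') ⊓ f ≤ f' ⊓ f := inf_le_inf_right f inf_le_right
                _ = 0 := by rw [inf_comm]; exact hff')
      rw [h1, h2, sup_idem]
    · exact le_trans hEF le_sup_left
    · intro x hx
      have ha : (0:G) ≤ |x| := abs_nonneg x
      have comp : ∀ c : G, 0 ≤ c → c ≤ e ⊔ f ⊔ e' ⊓ f' → |x| ⊓ c = 0 :=
        fun c hc hcle => my_disj _ _ ha hc (hx ▸ inf_le_inf_left _ hcle)
      have hxe : |x| ⊓ e = 0 := comp e he0 (le_trans le_sup_left le_sup_left)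
      have hxf : |x| ⊓ f = 0 := comp f hf0 (le_trans le_sup_right le_sup_left)
      have hxef' : |x| ⊓ (e' ⊓ f') = 0 := comp _ hEF' le_sup_right
      have hy : (0:G) ≤ |x| ⊓ e' := le_inf ha he'0
      have hyz : |x| ⊓ e' = 0 := by
        refine my_key f f' _ hwf hy ?_ ?_
        · exact my_disj _ _ hy hf0
            (le_trans (inf_le_inf_right f inf_le_left) hxf.le)
        · rw [inf_assoc]; exact hxef'
      exact main x hxe hyz
end

section
/- Let G be an abelian lattice-ordered group with weak order unit, and let N be a maximal proper c-subgroup. Then for every complementary pair e, f ∈ G⁺ (e ∧ f = 0 and e ∨ f a weak order unit), exactly one of e, f belongs to N. -/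
/-!
If neither `e` nor `f` lies in `N`, maximality of `N` puts a weak unit `w` into the convex
ℓ-subgroup generated by `N` and `f`, which is again a c-subgroup because `f` is complemented.
From `w ≤ n + k • f` with `n ∈ N` and `(k • f) ⊓ e = 0` we get `w ⊓ e ≤ n`, so `c := w ⊓ e ∈ N`,
and `c ⊔ f ≥ w ⊓ (e ⊔ f)` is a weak unit. Doing the same with `e` and `f` exchanged gives
`c' ∈ N`, and then `c ⊔ c' ≥ (c ⊔ f) ⊓ (c' ⊔ e)` is a weak unit in `N`.
-/

variable {G : Type*} [Lattice G] [AddCommGroup G]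
  [CovariantClass G G (· + ·) (· ≤ ·)]

attribute [local instance] AddCommGroup.toDistribLattice

section

omit [CovariantClass G G (· + ·) (· ≤ ·)]

variable {a b x : G}

theorem nonneg_of_inf_eq_zero_left (h : a ⊓ b = 0) : 0 ≤ a := h ▸ inf_le_left

theorem nonneg_of_inf_eq_zero_right (h : a ⊓ b = 0) : 0 ≤ b := h ▸ inf_le_right

theorem inf_eq_zero_of_le_right (h : a ⊓ b = 0) (hx : 0 ≤ x) (hxb : x ≤ b) : a ⊓ x = 0 :=
  le_antisymm (h ▸ inf_le_inf_left a hxb) (le_inf (nonneg_of_inf_eq_zero_left h) hx)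

namespace IsConvexLSubgroup

variable {H : Set G}

theorem add_mem (hH : IsConvexLSubgroup H) (ha : a ∈ H) (hb : b ∈ H) : a + b ∈ H :=
  hH.2.1 a ha b hb

theorem sup_mem (hH : IsConvexLSubgroup H) (ha : a ∈ H) (hb : b ∈ H) : a ⊔ b ∈ H :=
  hH.2.2.2.1 a ha b hb

theorem abs_mem (hH : IsConvexLSubgroup H) (ha : a ∈ H) : |a| ∈ H :=
  hH.sup_mem ha (hH.2.2.1 a ha)

theorem mem_of_le (hH : IsConvexLSubgroup H) (ha : 0 ≤ a) (hab : a ≤ b) (hb : b ∈ H) : a ∈ H :=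
  hH.2.2.2.2.2 a b ha hab hb

end IsConvexLSubgroup

theorem IsWeakUnit.mono {v w : G} (hv : IsWeakUnit v) (hvw : v ≤ w) : IsWeakUnit w :=
  ⟨hv.1.trans hvw, fun x hx => hv.2 x (inf_eq_zero_of_le_right hx hv.1 hvw)⟩

theorem IsMaxC.not_isWeakUnit_sup {N : Set G} (hN : IsMaxC N) (ha : a ∈ N) (hb : b ∈ N) :
    ¬ IsWeakUnit (a ⊔ b) :=
  hN.2.1 _ (hN.1.1.sup_mem ha hb)

theorem isComplementedElt_of_le {a' : G} (hw : IsWeakUnit (a ⊔ a')) (hab : a ≤ b)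
    (hba' : b ⊓ a' = 0) : IsComplementedElt b :=
  ⟨nonneg_of_inf_eq_zero_left hba', a', nonneg_of_inf_eq_zero_right hba', hba',
    hw.mono (sup_le_sup_right hab a')⟩

end

section Disjoint

variable {a x y : G}

theorem add_inf_le_add_inf (hx : 0 ≤ x) : (x + y) ⊓ a ≤ x + y ⊓ a := by
  rw [add_inf]
  exact inf_le_inf_left _ (le_add_of_nonneg_left hx)

theorem add_inf_eq_zero (hx : x ⊓ a = 0) (hy : y ⊓ a = 0) : (x + y) ⊓ a = 0 := by
  refine le_antisymm ?_ (le_inf (add_nonneg (nonneg_of_inf_eq_zero_left hx)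
    (nonneg_of_inf_eq_zero_left hy)) (nonneg_of_inf_eq_zero_right hx))
  calc (x + y) ⊓ a ≤ (x + y ⊓ a) ⊓ a :=
        le_inf (add_inf_le_add_inf (nonneg_of_inf_eq_zero_left hx)) inf_le_right
    _ = 0 := by rw [hy, add_zero, hx]

theorem nsmul_inf_eq_zero (h : x ⊓ a = 0) : ∀ k : ℕ, (k • x) ⊓ a = 0
  | 0 => by rw [zero_nsmul]; exact inf_eq_left.mpr (nonneg_of_inf_eq_zero_right h)
  | k + 1 => by rw [succ_nsmul]; exact add_inf_eq_zero (nsmul_inf_eq_zero h k) h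

end Disjoint

section WeakUnit

variable {a a' b b' v w y : G}

theorem IsWeakUnit.eq_zero_of_inf_eq_zero (hw : IsWeakUnit w) (h : y ⊓ w = 0) : y = 0 :=
  hw.2 y (by rwa [abs_of_nonneg (nonneg_of_inf_eq_zero_left h)])

theorem IsWeakUnit.inf (hv : IsWeakUnit v) (hw : IsWeakUnit w) : IsWeakUnit (v ⊓ w) :=
  ⟨le_inf hv.1 hw.1, fun x hx => hv.2 x (hw.eq_zero_of_inf_eq_zero (by rwa [inf_assoc]))⟩

theorem IsWeakUnit.sup_sup_inf (ha : IsWeakUnit (a ⊔ a')) (hb : IsWeakUnit (b ⊔ b')) :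
    IsWeakUnit (a ⊔ b ⊔ a' ⊓ b') :=
  (ha.inf hb).mono <| by
    rw [sup_inf_left]
    exact inf_le_inf (sup_le_sup_right le_sup_left a') (sup_le_sup_right le_sup_right b')

end WeakUnit

theorem abs_sup_le_abs_add_abs (a b : G) : |a ⊔ b| ≤ |a| + |b| := by
  refine abs_le'.mpr ⟨sup_le ?_ ?_, ?_⟩
  · exact (le_abs_self a).trans (le_add_of_nonneg_right (abs_nonneg b))
  · exact (le_abs_self b).trans (le_add_of_nonneg_left (abs_nonneg a))
  · rw [neg_sup]
    exact inf_le_left.trans ((neg_le_abs a).trans (le_add_of_nonneg_right (abs_nonneg b)))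

theorem abs_inf_le_abs_add_abs (a b : G) : |a ⊓ b| ≤ |a| + |b| := by
  rw [← abs_neg, neg_inf]
  simpa only [abs_neg] using abs_sup_le_abs_add_abs (-a) (-b)

namespace IsConvexLSubgroup

variable {H : Set G}

theorem of_abs_le_add (h0 : (0 : G) ∈ H)
    (hH : ∀ g ∈ H, ∀ g' ∈ H, ∀ h : G, |h| ≤ |g| + |g'| → h ∈ H) : IsConvexLSubgroup H :=
  ⟨h0, fun a ha b hb => hH a ha b hb _ (abs_add_le a b),
    fun a ha => hH a ha 0 h0 _ (by rw [abs_neg, abs_zero, add_zero]),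
    fun a ha b hb => hH a ha b hb _ (abs_sup_le_abs_add_abs a b),
    fun a ha b hb => hH a ha b hb _ (abs_inf_le_abs_add_abs a b),
    fun a b ha hab hb => hH b hb 0 h0 _ <| by
      rw [abs_of_nonneg ha, abs_zero, add_zero]
      exact hab.trans (le_abs_self b)⟩

end IsConvexLSubgroup

/-- The convex ℓ-subgroup generated by a convex ℓ-subgroup `N` and an element `b ≥ 0`. -/
def convexAdjoin (N : Set G) (b : G) : Set G :=
  {g | ∃ n ∈ N, 0 ≤ n ∧ ∃ k : ℕ, |g| ≤ n + k • b}

section ConvexAdjoin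

variable {N : Set G} {b : G}

theorem subset_convexAdjoin (hN : IsConvexLSubgroup N) : N ⊆ convexAdjoin N b :=
  fun n hn => ⟨|n|, hN.abs_mem hn, abs_nonneg n, 0, by rw [zero_nsmul, add_zero]⟩

theorem self_mem_convexAdjoin (hN : (0 : G) ∈ N) (hb : 0 ≤ b) : b ∈ convexAdjoin N b :=
  ⟨0, hN, le_rfl, 1, by rw [abs_of_nonneg hb, zero_add, one_nsmul]⟩

theorem isConvexLSubgroup_convexAdjoin (hN : IsConvexLSubgroup N) :
    IsConvexLSubgroup (convexAdjoin N b) := by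
  refine .of_abs_le_add ⟨0, hN.1, le_rfl, 0, by rw [abs_zero, zero_nsmul, add_zero]⟩ ?_
  rintro g ⟨n, hn, hn0, k, hg⟩ g' ⟨n', hn', hn'0, k', hg'⟩ h hh
  refine ⟨n + n', hN.add_mem hn hn', add_nonneg hn0 hn'0, k + k', ?_⟩
  calc |h| ≤ |g| + |g'| := hh
    _ ≤ (n + k • b) + (n' + k' • b) := add_le_add hg hg'
    _ = (n + n') + (k + k') • b := by rw [add_nsmul]; abel

/-- A bound `|h| ≤ n + k • b` is replaced by the complemented bound `c + (k + 1) • b`, where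
`c ≥ |n|` is complemented in `N`: the sum is disjoint from a complement of `c ⊔ b`. -/
theorem isCSubgroup_convexAdjoin (hN : IsCSubgroup N) (hb : IsComplementedElt b) :
    IsCSubgroup (convexAdjoin N b) := by
  obtain ⟨hb0, a, -, hba, hwba⟩ := hb
  refine ⟨isConvexLSubgroup_convexAdjoin hN.1, ?_⟩
  rintro h ⟨n, hn, -, k, hh⟩
  obtain ⟨c, hcN, ⟨hc0, d, hd0, hcd, hwcd⟩, hnc⟩ := hN.2 n hn
  have hda0 : 0 ≤ d ⊓ a := le_inf hd0 (nonneg_of_inf_eq_zero_right hba)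
  have hE0 : 0 ≤ c + (k + 1) • b := add_nonneg hc0 (nsmul_nonneg hb0 _)
  have hbE : b ≤ c + (k + 1) • b := by
    rw [succ_nsmul, ← add_assoc]
    exact le_add_of_nonneg_left (add_nonneg hc0 (nsmul_nonneg hb0 k))
  have hEda : (c + (k + 1) • b) ⊓ (d ⊓ a) = 0 :=
    add_inf_eq_zero (inf_eq_zero_of_le_right hcd hda0 inf_le_left)
      (nsmul_inf_eq_zero (inf_eq_zero_of_le_right hba hda0 inf_le_right) _)
  refine ⟨c + (k + 1) • b, ⟨c, hcN, hc0, k + 1, (abs_of_nonneg hE0).le⟩,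
    isComplementedElt_of_le (hwcd.sup_sup_inf hwba)
      (sup_le (le_add_of_nonneg_right (nsmul_nonneg hb0 _)) hbE) hEda, ?_⟩
  calc |h| ≤ n + k • b := hh
    _ ≤ c + (k + 1) • b :=
      add_le_add ((le_abs_self n).trans hnc) (nsmul_le_nsmul_left hb0 k.le_succ)

end ConvexAdjoin

namespace IsMaxC

variable {N : Set G} {a b : G}

theorem exists_isWeakUnit_mem_convexAdjoin (hN : IsMaxC N) (hb : IsComplementedElt b)
    (hbN : b ∉ N) : ∃ w ∈ convexAdjoin N b, IsWeakUnit w := by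
  by_contra! hno
  have hH := hN.2.2 _ (isCSubgroup_convexAdjoin hN.1 hb) hno (subset_convexAdjoin hN.1.1)
  exact hbN (hH ▸ self_mem_convexAdjoin hN.1.1.1 hb.1)

theorem exists_le_isWeakUnit_sup (hN : IsMaxC N) (hab : a ⊓ b = 0) (hw : IsWeakUnit (a ⊔ b))
    (hbN : b ∉ N) : ∃ c ∈ N, 0 ≤ c ∧ c ≤ a ∧ IsWeakUnit (c ⊔ b) := by
  have hba : b ⊓ a = 0 := by rwa [inf_comm]
  have hb : IsComplementedElt b :=
    ⟨nonneg_of_inf_eq_zero_left hba, a, nonneg_of_inf_eq_zero_right hba, hba, by rwa [sup_comm]⟩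
  obtain ⟨w, ⟨n, hn, hn0, k, hwn⟩, hwu⟩ := hN.exists_isWeakUnit_mem_convexAdjoin hb hbN
  have hc0 : 0 ≤ w ⊓ a := le_inf hwu.1 (nonneg_of_inf_eq_zero_left hab)
  have hcn : w ⊓ a ≤ n :=
    calc w ⊓ a ≤ (n + k • b) ⊓ a := inf_le_inf_right a ((le_abs_self w).trans hwn)
      _ ≤ n + (k • b) ⊓ a := add_inf_le_add_inf hn0
      _ = n := by rw [nsmul_inf_eq_zero hba k, add_zero]
  refine ⟨w ⊓ a, hN.1.1.mem_of_le hc0 hcn hn, hc0, inf_le_right, (hwu.inf hw).mono ?_⟩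
  rw [inf_sup_left]
  exact sup_le_sup_left inf_le_right _

end IsMaxC

theorem sup_inf_sup_le_sup {c c' e f : G} (hc : 0 ≤ c) (hce : c ≤ e) (hef : e ⊓ f = 0) :
    (c ⊔ f) ⊓ (c' ⊔ e) ≤ c ⊔ c' := by
  rw [inf_sup_left, inf_sup_right _ _ e, inf_eq_left.mpr hce, inf_comm f e, hef,
    sup_eq_left.mpr hc, sup_comm c c']
  exact sup_le_sup_right inf_le_right c

theorem maxC_xor_complementary_pair_general (N : Set G) (hN : IsMaxC N) (e f : G)
    (hef : e ⊓ f = 0) (hw : IsWeakUnit (e ⊔ f)) :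
    Xor' (e ∈ N) (f ∈ N) := by
  by_cases heN : e ∈ N
  · exact Or.inl ⟨heN, fun hfN => hN.not_isWeakUnit_sup heN hfN hw⟩
  refine Or.inr ⟨by_contra fun hfN => ?_, heN⟩
  obtain ⟨c, hcN, hc0, hce, hcf⟩ := hN.exists_le_isWeakUnit_sup hef hw hfN
  obtain ⟨c', hc'N, -, -, hc'e⟩ :=
    hN.exists_le_isWeakUnit_sup (by rwa [inf_comm]) (by rwa [sup_comm]) heN
  exact hN.not_isWeakUnit_sup hcN hc'N ((hcf.inf hc'e).mono (sup_inf_sup_le_sup hc0 hce hef))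

/-- a maximal proper c-subgroup contains exactly one member of
each complementary pair. -/
theorem maxC_xor_complementary_pair (u : G) (hu : IsWeakUnit u)
    (N : Set G) (hN : IsMaxC N) (e f : G) (he : 0 ≤ e) (hf : 0 ≤ f)
    (hef : e ⊓ f = 0) (hw : IsWeakUnit (e ⊔ f)) :
    Xor' (e ∈ N) (f ∈ N) :=
  maxC_xor_complementary_pair_general N hN e f hef hw
end

section
/- Let G be an abelian lattice-ordered group with weak order unit. For every maximal d-subgroup M, the c-subgroup M_c generated by the complemented elements of M is a maximal proper c-subgroup. -/
variable {G : Type*} [Lattice G] [AddCommGroup G]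
  [CovariantClass G G (· + ·) (· ≤ ·)]

/-! ### Auxiliary lemmas -/

/-- Riesz-type subadditivity of meet on positive elements. -/
lemma aux_inf_add_le {a b c : G} (ha : 0 ≤ a) (hb : 0 ≤ b) (hc : 0 ≤ c) :
    (a + b) ⊓ c ≤ a ⊓ c + b ⊓ c := by
  have h1 : (a + b) ⊓ c ≤ a ⊓ c + b := by
    calc (a + b) ⊓ c ≤ (a + b) ⊓ (c + b) := inf_le_inf_left _ (le_add_of_nonneg_right hb)
      _ = a ⊓ c + b := by rw [← inf_add]
  have h2 : (a + b) ⊓ c ≤ a ⊓ c + c :=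
    le_trans inf_le_right (le_add_of_nonneg_left (le_inf ha hc))
  calc (a + b) ⊓ c ≤ (a ⊓ c + b) ⊓ (a ⊓ c + c) := le_inf h1 h2
    _ = a ⊓ c + b ⊓ c := (add_inf b c (a ⊓ c)).symm

lemma aux_disj_add {a b c : G} (ha : 0 ≤ a) (hb : 0 ≤ b) (hc : 0 ≤ c)
    (h1 : a ⊓ c = 0) (h2 : b ⊓ c = 0) : (a + b) ⊓ c = 0 := by
  refine le_antisymm ?_ (le_inf (add_nonneg ha hb) hc)
  calc (a + b) ⊓ c ≤ a ⊓ c + b ⊓ c := aux_inf_add_le ha hb hc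
    _ = 0 := by rw [h1, h2, add_zero]

lemma aux_disj_nsmul {e f : G} (he : 0 ≤ e) (hf : 0 ≤ f) (h : e ⊓ f = 0) (n : ℕ) :
    (n • e) ⊓ f = 0 := by
  induction n with
  | zero => simpa using inf_eq_left.mpr hf
  | succ n ih =>
      rw [succ_nsmul]
      exact aux_disj_add (nsmul_nonneg he n) he hf ih h

lemma aux_weakUnit_inf {w v : G} (hw : IsWeakUnit w) (hv : IsWeakUnit v) :
    IsWeakUnit (w ⊓ v) := by
  refine ⟨le_inf hw.1 hv.1, fun x hx => ?_⟩
  have h0 : (0 : G) ≤ |x| ⊓ w := le_inf (abs_nonneg x) hw.1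
  have h1 : |(|x| ⊓ w)| ⊓ v = 0 := by
    rw [abs_of_nonneg h0, inf_assoc]; exact hx
  exact hw.2 x (hv.2 _ h1)

lemma aux_weakUnit_mono {w v : G} (hw : IsWeakUnit w) (hwv : w ≤ v) : IsWeakUnit v := by
  refine ⟨le_trans hw.1 hwv, fun x hx => ?_⟩
  have : |x| ⊓ w = 0 :=
    le_antisymm (hx ▸ inf_le_inf_left _ hwv) (le_inf (abs_nonneg _) hw.1)
  exact hw.2 x this

lemma aux_abs_sup_le (a b : G) : |a ⊔ b| ≤ |a| ⊔ |b| := by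
  refine sup_le (sup_le_sup (le_abs_self a) (le_abs_self b)) ?_
  rw [neg_sup]
  exact le_trans inf_le_left (le_trans (neg_le_abs a) le_sup_left)

lemma aux_abs_inf_le (a b : G) : |a ⊓ b| ≤ |a| ⊔ |b| := by
  refine sup_le (le_trans inf_le_left (le_trans (le_abs_self a) le_sup_left)) ?_
  rw [neg_inf]
  exact sup_le_sup (neg_le_abs a) (neg_le_abs b)

/-- In a convex ℓ-subgroup, membership follows from domination in absolute value. -/
lemma aux_mem_of_abs_le {H : Set G} (hH : IsConvexLSubgroup H) {g b : G}
    (hgb : |g| ≤ b) (hb : b ∈ H) : g ∈ H := by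
  obtain ⟨h0, hadd, hneg, hsup, hinf, hconv⟩ := hH
  have habs : |g| ∈ H := hconv _ _ (abs_nonneg g) hgb hb
  have hpos : g ⊔ 0 ∈ H :=
    hconv _ _ le_sup_right (sup_le (le_abs_self g) (abs_nonneg g)) habs
  have hnegpart : (-g) ⊔ 0 ∈ H :=
    hconv _ _ le_sup_right (sup_le (neg_le_abs g) (abs_nonneg g)) habs
  have hmem : g ⊔ 0 + -((-g) ⊔ 0) ∈ H := hadd _ hpos _ (hneg _ hnegpart)
  have heq : g ⊔ 0 + -((-g) ⊔ 0) = g := by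
    rw [neg_sup, neg_neg, neg_zero, add_comm, inf_add_sup]
    exact add_zero g
  rwa [heq] at hmem

lemma aux_abs_mem {H : Set G} (hH : IsConvexLSubgroup H) {m : G} (hm : m ∈ H) :
    |m| ∈ H := hH.2.2.2.1 m hm (-m) (hH.2.2.1 m hm)

/-- The sum of two complemented elements is complemented. -/
lemma aux_compl_add {e₁ e₂ : G} (h₁ : IsComplementedElt e₁) (h₂ : IsComplementedElt e₂) :
    IsComplementedElt (e₁ + e₂) := by
  obtain ⟨he₁, f₁, hf₁, hd₁, hw₁⟩ := h₁
  obtain ⟨he₂, f₂, hf₂, hd₂, hw₂⟩ := h₂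
  refine ⟨add_nonneg he₁ he₂, f₁ ⊓ f₂, le_inf hf₁ hf₂, ?_, ?_⟩
  · refine aux_disj_add he₁ he₂ (le_inf hf₁ hf₂) ?_ ?_
    · exact le_antisymm (le_trans (inf_le_inf_left _ inf_le_left) hd₁.le)
        (le_inf he₁ (le_inf hf₁ hf₂))
    · exact le_antisymm (le_trans (inf_le_inf_left _ inf_le_right) hd₂.le)
        (le_inf he₂ (le_inf hf₁ hf₂))
  · refine aux_weakUnit_mono (aux_weakUnit_inf hw₁ hw₂) ?_
    have hdist : (e₁ + e₂) ⊔ (f₁ ⊓ f₂) = ((e₁ + e₂) ⊔ f₁) ⊓ ((e₁ + e₂) ⊔ f₂) := by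
      letI := AddCommGroup.toDistribLattice G
      exact sup_inf_left _ _ _
    rw [hdist]
    exact inf_le_inf (sup_le_sup_right (le_add_of_nonneg_right he₂) f₁)
      (sup_le_sup_right (le_add_of_nonneg_left he₁) f₂)

/-- Either `e ∈ M`, or the convex ℓ-subgroup generated by `M` and `e` contains
a weak unit dominated by `m + n • e`. -/
lemma aux_mem_or_unit {M : Set G} (hM : IsMaxD M) {e : G} (he : 0 ≤ e) :
    e ∈ M ∨ ∃ (w m : G) (n : ℕ), IsWeakUnit w ∧ m ∈ M ∧ 0 ≤ m ∧ w ≤ m + n • e := by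
  obtain ⟨hM0, hMadd, hMneg, hMsup, hMinf, hMconv⟩ := hM.1
  set H : Set G := {g | ∃ (m : G) (n : ℕ), m ∈ M ∧ 0 ≤ m ∧ |g| ≤ m + n • e} with hHdef
  have hHc : IsConvexLSubgroup H := by
    refine ⟨⟨0, 0, hM0, le_refl 0, by simp⟩, ?_, ?_, ?_, ?_, ?_⟩
    · rintro a ⟨m₁, n₁, hm₁, hm₁0, h₁⟩ b ⟨m₂, n₂, hm₂, hm₂0, h₂⟩
      refine ⟨m₁ + m₂, n₁ + n₂, hMadd _ hm₁ _ hm₂, add_nonneg hm₁0 hm₂0, ?_⟩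
      calc |a + b| ≤ |a| + |b| := abs_add_le a b
        _ ≤ (m₁ + n₁ • e) + (m₂ + n₂ • e) := add_le_add h₁ h₂
        _ = m₁ + m₂ + (n₁ + n₂) • e := by rw [add_nsmul]; abel
    · rintro a ⟨m, n, hm, hm0, h⟩
      exact ⟨m, n, hm, hm0, by rwa [abs_neg]⟩
    · rintro a ⟨m₁, n₁, hm₁, hm₁0, h₁⟩ b ⟨m₂, n₂, hm₂, hm₂0, h₂⟩
      refine ⟨m₁ + m₂, n₁ + n₂, hMadd _ hm₁ _ hm₂, add_nonneg hm₁0 hm₂0, ?_⟩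
      calc |a ⊔ b| ≤ |a| ⊔ |b| := aux_abs_sup_le a b
        _ ≤ |a| + |b| := sup_le (le_add_of_nonneg_right (abs_nonneg b))
            (le_add_of_nonneg_left (abs_nonneg a))
        _ ≤ (m₁ + n₁ • e) + (m₂ + n₂ • e) := add_le_add h₁ h₂
        _ = m₁ + m₂ + (n₁ + n₂) • e := by rw [add_nsmul]; abel
    · rintro a ⟨m₁, n₁, hm₁, hm₁0, h₁⟩ b ⟨m₂, n₂, hm₂, hm₂0, h₂⟩
      refine ⟨m₁ + m₂, n₁ + n₂, hMadd _ hm₁ _ hm₂, add_nonneg hm₁0 hm₂0, ?_⟩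
      calc |a ⊓ b| ≤ |a| ⊔ |b| := aux_abs_inf_le a b
        _ ≤ |a| + |b| := sup_le (le_add_of_nonneg_right (abs_nonneg b))
            (le_add_of_nonneg_left (abs_nonneg a))
        _ ≤ (m₁ + n₁ • e) + (m₂ + n₂ • e) := add_le_add h₁ h₂
        _ = m₁ + m₂ + (n₁ + n₂) • e := by rw [add_nsmul]; abel
    · rintro a b ha hab ⟨m, n, hm, hm0, h⟩
      exact ⟨m, n, hm, hm0, by
        rw [abs_of_nonneg ha]
        exact le_trans hab (le_trans (le_abs_self b) h)⟩
  by_cases hWU : ∀ w ∈ H, ¬ IsWeakUnit w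
  · left
    have hMH : M ⊆ H := fun m hm =>
      ⟨|m|, 0, aux_abs_mem ⟨hM0, hMadd, hMneg, hMsup, hMinf, hMconv⟩ hm, abs_nonneg m,
        by simp⟩
    have hHM := hM.2.2 H hHc hWU hMH
    rw [← hHM]
    exact ⟨0, 1, hM0, le_refl 0, by simp [abs_of_nonneg he]⟩
  · right
    push_neg at hWU
    obtain ⟨w, ⟨m, n, hm, hm0, hwle⟩, hw⟩ := hWU
    exact ⟨w, m, n, hw, hm, hm0, by rwa [abs_of_nonneg hw.1] at hwle⟩

/-- A maximal d-subgroup contains at least one member of each complementary pair. -/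
lemma aux_pair_mem {M : Set G} (hM : IsMaxD M) {e f : G} (he : 0 ≤ e) (hf : 0 ≤ f)
    (hef : e ⊓ f = 0) (hw : IsWeakUnit (e ⊔ f)) : e ∈ M ∨ f ∈ M := by
  by_contra hcon
  push_neg at hcon
  obtain ⟨heM, hfM⟩ := hcon
  obtain he' | ⟨w, m, n, hwu, hm, hm0, hwle⟩ := aux_mem_or_unit hM he
  · exact heM he'
  obtain hf' | ⟨v, m', n', hvu, hm', hm'0, hvle⟩ := aux_mem_or_unit hM hf
  · exact hfM hf'
  obtain ⟨hM0, hMadd, hMneg, hMsup, hMinf, hMconv⟩ := hM.1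
  have hne : 0 ≤ n • e := nsmul_nonneg he n
  have hnf : 0 ≤ n' • f := nsmul_nonneg hf n'
  have hB : 0 ≤ m' + n' • f := add_nonneg hm'0 hnf
  have hdisj : (n • e) ⊓ (n' • f) = 0 := by
    have h1 : (n • e) ⊓ f = 0 := aux_disj_nsmul he hf hef n
    have h2 : f ⊓ (n • e) = 0 := by rwa [inf_comm] at h1
    have h3 := aux_disj_nsmul hf hne h2 n'
    rwa [inf_comm] at h3
  have hA1 : m ⊓ (m' + n' • f) ≤ m ⊓ m' + m ⊓ (n' • f) := by
    rw [inf_comm m (m' + n' • f), inf_comm m m', inf_comm m (n' • f)]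
    exact aux_inf_add_le hm'0 hnf hm0
  have hA2 : (n • e) ⊓ (m' + n' • f) ≤ (n • e) ⊓ m' + (n • e) ⊓ (n' • f) := by
    rw [inf_comm (n • e) (m' + n' • f), inf_comm (n • e) m', inf_comm (n • e) (n' • f)]
    exact aux_inf_add_le hm'0 hnf hne
  have hkey : w ⊓ v ≤ m ⊓ m' + m ⊓ (n' • f) + (n • e) ⊓ m' := by
    calc w ⊓ v ≤ (m + n • e) ⊓ (m' + n' • f) := inf_le_inf hwle hvle
      _ ≤ m ⊓ (m' + n' • f) + (n • e) ⊓ (m' + n' • f) := aux_inf_add_le hm0 hne hB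
      _ ≤ (m ⊓ m' + m ⊓ (n' • f)) + ((n • e) ⊓ m' + (n • e) ⊓ (n' • f)) :=
          add_le_add hA1 hA2
      _ = m ⊓ m' + m ⊓ (n' • f) + (n • e) ⊓ m' := by rw [hdisj, add_zero]
  have hsumM : m ⊓ m' + m ⊓ (n' • f) + (n • e) ⊓ m' ∈ M := by
    refine hMadd _ (hMadd _ (hMinf _ hm _ hm') _ ?_) _ ?_
    · exact hMconv _ _ (le_inf hm0 hnf) inf_le_left hm
    · exact hMconv _ _ (le_inf hne hm'0) inf_le_right hm'
  have hwvM : w ⊓ v ∈ M := hMconv _ _ (le_inf hwu.1 hvu.1) hkey hsumM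
  exact hM.2.1 _ hwvM (aux_weakUnit_inf hwu hvu)

/-- for every maximal d-subgroup `M`, the c-subgroup `M_c`
generated by the complemented elements of `M` is a maximal proper c-subgroup. -/
theorem Mc_isMaxC (u : G) (hu : IsWeakUnit u)
    (M : Set G) (hM : IsMaxD M) : IsMaxC (Mc M) := by
  obtain ⟨hM0, hMadd, hMneg, hMsup, hMinf, hMconv⟩ := hM.1
  set S : Set G := {e ∈ M | IsComplementedElt e} with hSdef
  set P : Set G := {g | ∃ e, e ∈ M ∧ IsComplementedElt e ∧ |g| ≤ e} with hPdef
  have hzeroC : IsComplementedElt (0 : G) :=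
    ⟨le_refl 0, u, hu.1, inf_eq_left.mpr hu.1, by rwa [sup_eq_right.mpr hu.1]⟩
  have hPc : IsConvexLSubgroup P := by
    refine ⟨⟨0, hM0, hzeroC, by simp⟩, ?_, ?_, ?_, ?_, ?_⟩
    · rintro a ⟨e₁, he₁M, he₁c, h₁⟩ b ⟨e₂, he₂M, he₂c, h₂⟩
      refine ⟨e₁ + e₂, hMadd _ he₁M _ he₂M, aux_compl_add he₁c he₂c, ?_⟩
      calc |a + b| ≤ |a| + |b| := abs_add_le a b
        _ ≤ e₁ + e₂ := add_le_add h₁ h₂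
    · rintro a ⟨e₁, he₁M, he₁c, h₁⟩
      exact ⟨e₁, he₁M, he₁c, by rwa [abs_neg]⟩
    · rintro a ⟨e₁, he₁M, he₁c, h₁⟩ b ⟨e₂, he₂M, he₂c, h₂⟩
      refine ⟨e₁ + e₂, hMadd _ he₁M _ he₂M, aux_compl_add he₁c he₂c, ?_⟩
      refine le_trans (aux_abs_sup_le a b) (sup_le ?_ ?_)
      · exact le_trans h₁ (le_add_of_nonneg_right he₂c.1)
      · exact le_trans h₂ (le_add_of_nonneg_left he₁c.1)
    · rintro a ⟨e₁, he₁M, he₁c, h₁⟩ b ⟨e₂, he₂M, he₂c, h₂⟩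
      refine ⟨e₁ + e₂, hMadd _ he₁M _ he₂M, aux_compl_add he₁c he₂c, ?_⟩
      refine le_trans (aux_abs_inf_le a b) (sup_le ?_ ?_)
      · exact le_trans h₁ (le_add_of_nonneg_right he₂c.1)
      · exact le_trans h₂ (le_add_of_nonneg_left he₁c.1)
    · rintro a b ha hab ⟨e₁, he₁M, he₁c, h₁⟩
      refine ⟨e₁, he₁M, he₁c, ?_⟩
      rw [abs_of_nonneg ha]
      exact le_trans hab (le_trans (le_abs_self b) h₁)
  have hSP : S ⊆ P := fun e he => ⟨e, he.1, he.2, le_of_eq (abs_of_nonneg he.2.1)⟩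
  have hMcP : Mc M ⊆ P := Set.sInter_subset_of_mem ⟨hPc, hSP⟩
  have hPMc : P ⊆ Mc M := by
    rintro g ⟨e, heM, hec, hge⟩
    exact Set.mem_sInter.mpr fun H hH => aux_mem_of_abs_le hH.1 hge (hH.2 ⟨heM, hec⟩)
  have hMcEq : Mc M = P := Set.Subset.antisymm hMcP hPMc
  have hSsubMc : S ⊆ Mc M := fun e he => Set.mem_sInter.mpr fun H hH => hH.2 he
  have hMcM : Mc M ⊆ M :=
    Set.sInter_subset_of_mem ⟨⟨hM0, hMadd, hMneg, hMsup, hMinf, hMconv⟩, fun e he => he.1⟩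
  refine ⟨⟨by rw [hMcEq]; exact hPc, ?_⟩, ?_, ?_⟩
  · intro h hh
    obtain ⟨e, heM, hec, hle⟩ := hMcP hh
    exact ⟨e, hSsubMc ⟨heM, hec⟩, hec, hle⟩
  · exact fun w hw => hM.2.1 w (hMcM hw)
  · intro H hH hHnw hMcH
    refine Set.Subset.antisymm ?_ hMcH
    intro h hh
    obtain ⟨e, heH, hec, hle⟩ := hH.2 h hh
    obtain ⟨he0, f, hf0, hef, hwef⟩ := hec
    have heM : e ∈ M := by
      rcases aux_pair_mem hM he0 hf0 hef hwef with h' | hfM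
      · exact h'
      · exfalso
        have hfS : f ∈ S := ⟨hfM, hf0, e, he0, by rwa [inf_comm], by rwa [sup_comm]⟩
        have hfH : f ∈ H := hMcH (hSsubMc hfS)
        have hsupH : e ⊔ f ∈ H := hH.1.2.2.2.1 e heH f hfH
        exact hHnw _ hsupH hwef
    exact hPMc ⟨e, heM, ⟨he0, f, hf0, hef, hwef⟩, hle⟩
end

section
/- Let G be an abelian lattice-ordered group with weak order unit, and let M be a convex ℓ-subgroup maximal with respect to not containing any weak order unit. Then M is prime: if a, b ∈ G⁺ and a ∧ b = 0, then a ∈ M or b ∈ M. -/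
/-!
If neither `a` nor `b` lies in `M`, maximality puts a weak unit `wa` below `ma + n • a` and a weak
unit `wb` below `mb + k • b` for some `ma, mb ∈ M`. The infimum of two weak units is a weak unit,
and disjointness of `a` and `b` makes `n • a` and `k • b` disjoint, so
`wa ⊓ wb ≤ (ma ⊔ mb + n • a) ⊓ (ma ⊔ mb + k • b) = ma ⊔ mb`, which puts a weak unit in `M`.
-/

variable {G : Type*} [Lattice G] [AddCommGroup G]
  [CovariantClass G G (· + ·) (· ≤ ·)]

open LatticeOrderedAddCommGroup

lemma abs_sup_le_abs_add_abs_s19 (x y : G) : |x ⊔ y| ≤ |x| + |y| := by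
  rw [abs_le', neg_sup]
  exact ⟨sup_le ((le_abs_self x).trans (le_add_of_nonneg_right (abs_nonneg y)))
      ((le_abs_self y).trans (le_add_of_nonneg_left (abs_nonneg x))),
    inf_le_left.trans ((neg_le_abs x).trans (le_add_of_nonneg_right (abs_nonneg y)))⟩

lemma abs_inf_le_abs_add_abs_s19 (x y : G) : |x ⊓ y| ≤ |x| + |y| := by
  have h : x ⊓ y = -(-x ⊔ -y) := by rw [neg_sup, neg_neg, neg_neg]
  simpa [h] using abs_sup_le_abs_add_abs_s19 (-x) (-y)

lemma add_inf_eq_zero_s19 {a b c : G} (hac : a ⊓ c = 0) (hbc : b ⊓ c = 0) : (a + b) ⊓ c = 0 := by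
  have ha : 0 ≤ a := hac ▸ inf_le_left
  have hb : 0 ≤ b := hbc ▸ inf_le_left
  have hc : 0 ≤ c := hac ▸ inf_le_right
  refine le_antisymm ?_ (le_inf (add_nonneg ha hb) hc)
  calc (a + b) ⊓ c ≤ (a + b) ⊓ (a + c) ⊓ c :=
        le_inf (inf_le_inf_left _ (le_add_of_nonneg_left ha)) inf_le_right
    _ = a ⊓ c := by rw [← add_inf, hbc, add_zero]
    _ = 0 := hac

lemma nsmul_inf_eq_zero_s19 {a b : G} (hab : a ⊓ b = 0) (n : ℕ) : (n • a) ⊓ b = 0 := by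
  induction n with
  | zero => simpa using (hab ▸ inf_le_right : (0 : G) ≤ b)
  | succ n ih => rw [succ_nsmul]; exact add_inf_eq_zero_s19 ih hab

lemma nsmul_inf_nsmul_eq_zero {a b : G} (hab : a ⊓ b = 0) (n k : ℕ) : (n • a) ⊓ (k • b) = 0 := by
  rw [inf_comm]
  exact nsmul_inf_eq_zero_s19 (by rw [inf_comm]; exact nsmul_inf_eq_zero_s19 hab n) k

lemma IsWeakUnit.inf_s19 {w w' : G} (hw : IsWeakUnit w) (hw' : IsWeakUnit w') :
    IsWeakUnit (w ⊓ w') := by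
  refine ⟨le_inf hw.1 hw'.1, fun x hx => hw.2 x ?_⟩
  have hnonneg : 0 ≤ |x| ⊓ w := le_inf (abs_nonneg x) hw.1
  exact hw'.2 _ (by rw [abs_of_nonneg hnonneg, inf_assoc, hx])

lemma isConvexLSubgroup_of_isSolid {H : Set G} (h0 : (0 : G) ∈ H)
    (hadd : ∀ x ∈ H, ∀ y ∈ H, x + y ∈ H) (hsolid : IsSolid H) : IsConvexLSubgroup H := by
  have habs : ∀ x ∈ H, |x| ∈ H := fun x hx => hsolid hx (abs_abs x).le
  have hbounded : ∀ z, ∀ x ∈ H, ∀ y ∈ H, |z| ≤ |x| + |y| → z ∈ H := fun z x hx y hy hz =>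
    hsolid (hadd _ (habs x hx) _ (habs y hy))
      (hz.trans (le_abs_self _))
  refine ⟨h0, hadd, fun x hx => hsolid hx (abs_neg x).le,
    fun x hx y hy => hbounded _ x hx y hy (abs_sup_le_abs_add_abs_s19 x y),
    fun x hx y hy => hbounded _ x hx y hy (abs_inf_le_abs_add_abs_s19 x y),
    fun a b ha hab hb => hsolid hb ((abs_of_nonneg ha).trans_le (hab.trans (le_abs_self b)))⟩

/-- For a convex ℓ-subgroup `M` and `0 ≤ a`, the convex ℓ-subgroup generated by `M ∪ {a}`. -/
def adjoinPos (M : Set G) (a : G) : Set G := {x | ∃ m ∈ M, ∃ n : ℕ, |x| ≤ m + n • a}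

omit [CovariantClass G G (· + ·) (· ≤ ·)] in
lemma subset_adjoinPos {M : Set G} (hM : IsConvexLSubgroup M) (a : G) : M ⊆ adjoinPos M a :=
  fun x hx => ⟨|x|, hM.2.2.2.1 x hx (-x) (hM.2.2.1 x hx), 0, by simp⟩

lemma mem_adjoinPos_self {M : Set G} (hM : IsConvexLSubgroup M) {a : G} (ha : 0 ≤ a) :
    a ∈ adjoinPos M a :=
  ⟨0, hM.1, 1, by simp [abs_of_nonneg ha]⟩

lemma isConvexLSubgroup_adjoinPos {M : Set G} (hM : IsConvexLSubgroup M) (a : G) :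
    IsConvexLSubgroup (adjoinPos M a) := by
  refine isConvexLSubgroup_of_isSolid ⟨0, hM.1, 0, by simp⟩ ?_
    fun x ⟨m, hm, n, hx⟩ y hyx => ⟨m, hm, n, hyx.trans hx⟩
  rintro x ⟨m, hm, n, hx⟩ y ⟨m', hm', n', hy⟩
  refine ⟨m + m', hM.2.1 m hm m' hm', n + n', ?_⟩
  calc |x + y| ≤ |x| + |y| := abs_add_le x y
    _ ≤ (m + n • a) + (m' + n' • a) := add_le_add hx hy
    _ = m + m' + (n + n') • a := by rw [add_nsmul]; abel

lemma exists_isWeakUnit_mem_adjoinPos {M : Set G} (hM : IsConvexLSubgroup M)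
    (hmax : ∀ H : Set G, IsConvexLSubgroup H → (∀ w ∈ H, ¬ IsWeakUnit w) → M ⊆ H → H = M)
    {a : G} (ha : 0 ≤ a) (haM : a ∉ M) : ∃ w ∈ adjoinPos M a, IsWeakUnit w := by
  by_contra! h
  have hMa := hmax _ (isConvexLSubgroup_adjoinPos hM a) h (subset_adjoinPos hM a)
  exact haM (hMa ▸ mem_adjoinPos_self hM ha)

lemma inf_le_sup_of_le_add_nsmul {a b x y m m' : G} (hab : a ⊓ b = 0) {n k : ℕ}
    (hx : x ≤ m + n • a) (hy : y ≤ m' + k • b) : x ⊓ y ≤ m ⊔ m' :=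
  calc x ⊓ y ≤ (m ⊔ m' + n • a) ⊓ (m ⊔ m' + k • b) :=
        inf_le_inf (hx.trans (add_le_add_left le_sup_left _))
          (hy.trans (add_le_add_left le_sup_right _))
    _ = m ⊔ m' := by rw [← add_inf, nsmul_inf_nsmul_eq_zero hab, add_zero]

theorem maxD_is_prime_general
    (M : Set G) (hM : IsConvexLSubgroup M) (hMw : ∀ w ∈ M, ¬ IsWeakUnit w)
    (hmax : ∀ H : Set G, IsConvexLSubgroup H → (∀ w ∈ H, ¬ IsWeakUnit w) →
      M ⊆ H → H = M)
    (a b : G) (ha : 0 ≤ a) (hb : 0 ≤ b) (hab : a ⊓ b = 0) :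
    a ∈ M ∨ b ∈ M := by
  by_contra! h
  obtain ⟨wa, ⟨ma, hma, n, hwa_le⟩, hwa⟩ := exists_isWeakUnit_mem_adjoinPos hM hmax ha h.1
  obtain ⟨wb, ⟨mb, hmb, k, hwb_le⟩, hwb⟩ := exists_isWeakUnit_mem_adjoinPos hM hmax hb h.2
  have hle : wa ⊓ wb ≤ ma ⊔ mb := inf_le_sup_of_le_add_nsmul hab
    ((le_abs_self wa).trans hwa_le) ((le_abs_self wb).trans hwb_le)
  have hmem : wa ⊓ wb ∈ M :=
    hM.2.2.2.2.2 _ _ (hwa.inf_s19 hwb).1 hle (hM.2.2.2.1 ma hma mb hmb)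
  exact hMw _ hmem (hwa.inf_s19 hwb)

/-- a convex ℓ-subgroup maximal with respect to not containing
any weak order unit is prime. -/
theorem maxD_is_prime (u : G) (hu : IsWeakUnit u)
    (M : Set G) (hM : IsConvexLSubgroup M) (hMw : ∀ w ∈ M, ¬ IsWeakUnit w)
    (hmax : ∀ H : Set G, IsConvexLSubgroup H → (∀ w ∈ H, ¬ IsWeakUnit w) →
      M ⊆ H → H = M)
    (a b : G) (ha : 0 ≤ a) (hb : 0 ≤ b) (hab : a ⊓ b = 0) :
    a ∈ M ∨ b ∈ M :=
  maxD_is_prime_general M hM hMw hmax a b ha hb hab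
end
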